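/- Let 0 ≤ b < d, φ(x) := exp(−x²/2) and m̂ := ∫_b^d φ(x) dx. For λ ≥ max(b², 1), define F(λ) := ∫_0^{1 − bλ^{-1/2}} ∫_b^{min(d, √λ(1−α₁))} φ(z) ( ∫_0^z φ(y)^{-1} ( ∫_{max(y,b)}^{min(d, y − z + √λ(1−α₁))} φ(x) dx ) dy ) dz dα₁, where an inner integral over an interval [u, v] with v < u is taken to be 0. Then lim_{λ → ∞} F(λ) = m̂² ∫_0^b φ(y)^{-1} dy + ∫_b^d φ(z) ( ∫_b^z φ(y)^{-1} ( ∫_y^d φ(x) dx ) dy ) dz. -/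

import Mathlib

open MeasureTheory Real Filter

/-- `φ(x) = exp(−x²/2)`. -/
noncomputable def phi (x : ℝ) : ℝ := Real.exp (-(x ^ 2 / 2))

/-- Integral of `f` over the interval `[u, v]`, taken to be `0` when `v < u`. -/
noncomputable def oint (u v : ℝ) (f : ℝ → ℝ) : ℝ := ∫ x in Set.Ioc u v, f x

/-!
Write `t = √λ (1 - α₁)` and let `G(t)` be the double integral over `z` and `y`, so that
`F(λ) = ∫₀^{1 - b/√λ} G(√λ (1 - α₁)) dα₁`. The integrand of `G` grows with `t` and is
nonnegative, so `G` is monotone; once `t ≥ 2d` both truncations `min d ·` are inactive and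
`G(t)` equals a constant `L`, which splitting the `y`-integral at `b` identifies with the
claimed limit. Hence `(1 - 2d/√λ) L ≤ F(λ) ≤ (1 - b/√λ) L` for large `λ`.
-/

open Set Topology

section oint

variable {u v : ℝ} {f g : ℝ → ℝ}

lemma oint_of_le (h : u ≤ v) : oint u v f = ∫ x in u..v, f x :=
  (intervalIntegral.integral_of_le h).symm

lemma oint_eq_intervalIntegral_max : oint u v f = ∫ x in u..max u v, f x := by
  rw [← oint_of_le (le_max_left u v), oint, oint]
  rcases le_total u v with h | h
  · rw [max_eq_right h]
  · rw [max_eq_left h, Ioc_self, Ioc_eq_empty h.not_gt]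

lemma oint_nonneg (hf : ∀ x ∈ Ioc u v, 0 ≤ f x) : 0 ≤ oint u v f :=
  setIntegral_nonneg measurableSet_Ioc hf

lemma oint_mono (hf : IntegrableOn f (Ioc u v)) (hg : IntegrableOn g (Ioc u v))
    (h : ∀ x ∈ Ioc u v, f x ≤ g x) : oint u v f ≤ oint u v g :=
  setIntegral_mono_on hf hg measurableSet_Ioc h

lemma oint_mono_right {v' : ℝ} (hf : IntegrableOn f (Ioc u v')) (hf0 : ∀ x, 0 ≤ f x)
    (h : v ≤ v') : oint u v f ≤ oint u v' f :=
  setIntegral_mono_set hf (ae_of_all _ hf0) (Ioc_subset_Ioc_right h).eventuallyLE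

end oint

lemma continuous_oint {X : Type*} [TopologicalSpace X] {u v : X → ℝ} {g : X → ℝ → ℝ}
    (hu : Continuous u) (hv : Continuous v) (hg : Continuous (Function.uncurry g)) :
    Continuous fun x => oint (u x) (v x) (g x) := by
  have hprim : ∀ {w : X → ℝ}, Continuous w → Continuous fun x => ∫ y in (0:ℝ)..w x, g x y :=
    fun hw => intervalIntegral.continuous_parametric_intervalIntegral_of_continuous hg hw
  have hint : ∀ x (a c : ℝ), IntervalIntegrable (g x) volume a c := fun x a c =>
    (hg.comp (Continuous.prodMk_right x)).intervalIntegrable a c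
  have heq : (fun x => oint (u x) (v x) (g x)) =
      fun x => (∫ y in (0:ℝ)..max (u x) (v x), g x y) - ∫ y in (0:ℝ)..u x, g x y := by
    ext x
    rw [oint_eq_intervalIntegral_max, intervalIntegral.integral_interval_sub_left
      (hint _ 0 _) (hint _ 0 _)]
  rw [heq]
  exact (hprim (hu.max hv)).sub (hprim hu)

lemma tendsto_oint_comp_mul_one_sub {f : ℝ → ℝ} {L T : ℝ} (b : ℝ) (hf : Monotone f)
    (hf0 : ∀ t, 0 ≤ f t) (hfL : ∀ t, T ≤ t → f t = L) :
    Tendsto (fun s => oint 0 (1 - b / s) (fun a => f (s * (1 - a)))) atTop (𝓝 L) := by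
  set T' := max (max T b) 1
  have hT'T : T ≤ T' := (le_max_left _ _).trans (le_max_left _ _)
  have hbT' : b ≤ T' := (le_max_right _ _).trans (le_max_left _ _)
  have hT'pos : 0 < T' := zero_lt_one.trans_le (le_max_right _ _)
  have hfL' : ∀ t, T' ≤ t → f t = L := fun t ht => hfL t (hT'T.trans ht)
  have hfle : ∀ t, f t ≤ L := fun t =>
    (hf (le_max_left t T')).trans_eq (hfL' _ (le_max_right _ _))
  have hint : ∀ s u v, IntegrableOn (fun a => f (s * (1 - a))) (Ioc u v) := fun s u v =>
    Measure.integrableOn_of_bounded measure_Ioc_lt_top.ne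
      (hf.measurable.comp (by fun_prop)).aestronglyMeasurable
      (ae_of_all _ fun a => by
        rw [Real.norm_eq_abs, abs_of_nonneg (hf0 _)]; exact hfle _)
  have hlim : ∀ c, Tendsto (fun s : ℝ => (1 - c / s) * L) atTop (𝓝 L) := fun c => by
    simpa using ((tendsto_const_nhds.div_atTop tendsto_id).const_sub 1).mul_const L
  refine tendsto_of_tendsto_of_tendsto_of_le_of_le' (hlim T') (hlim b) ?_ ?_ <;>
    filter_upwards [eventually_ge_atTop T'] with s hs <;>
    have hs0 : 0 < s := hT'pos.trans_le hs
  · have hsub : T' / s ≤ 1 := (div_le_one hs0).2 hs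
    calc (1 - T' / s) * L = oint 0 (1 - T' / s) (fun a => f (s * (1 - a))) := by
          rw [oint, setIntegral_congr_fun measurableSet_Ioc (g := fun _ => L), setIntegral_const,
            Real.volume_real_Ioc_of_le (by linarith), smul_eq_mul, sub_zero]
          intro a ha
          apply hfL'
          have : T' / s ≤ 1 - a := by linarith [ha.2]
          calc T' = s * (T' / s) := by field_simp
            _ ≤ s * (1 - a) := by gcongr
      _ ≤ oint 0 (1 - b / s) (fun a => f (s * (1 - a))) :=
          oint_mono_right (hint _ _ _) (fun _ => hf0 _) (by gcongr)
  · calc oint 0 (1 - b / s) (fun a => f (s * (1 - a))) ≤ oint 0 (1 - b / s) (fun _ => L) :=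
          oint_mono (hint _ _ _) (integrableOn_const measure_Ioc_lt_top.ne) (fun _ _ => hfle _)
      _ = (1 - b / s) * L := by
          rw [oint, setIntegral_const, Real.volume_real_Ioc_of_le, smul_eq_mul, sub_zero]
          linarith [(div_le_one hs0).2 (hbT'.trans hs)]

lemma phi_pos (x : ℝ) : 0 < phi x := Real.exp_pos _

@[fun_prop] lemma continuous_phi : Continuous phi := by unfold phi; fun_prop

@[fun_prop] lemma continuous_inv_phi : Continuous fun y => (phi y)⁻¹ :=
  continuous_phi.inv₀ fun y => (phi_pos y).ne'

lemma oint_phi_nonneg (u v : ℝ) : 0 ≤ oint u v phi :=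
  oint_nonneg fun x _ => (phi_pos x).le

lemma oint_phi_mono_right {u v v' : ℝ} (h : v ≤ v') : oint u v phi ≤ oint u v' phi :=
  oint_mono_right continuous_phi.integrableOn_Ioc (fun x => (phi_pos x).le) h

section doubleIntegral

variable (b d : ℝ)

noncomputable def doubleIntegrand (t z : ℝ) : ℝ :=
  phi z * oint 0 z fun y => (phi y)⁻¹ * oint (max y b) (min d (y - z + t)) phi

noncomputable def doubleIntegral (t : ℝ) : ℝ :=
  oint b (min d t) (doubleIntegrand b d t)

lemma doubleIntegrand_nonneg (t z : ℝ) : 0 ≤ doubleIntegrand b d t z :=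
  mul_nonneg (phi_pos z).le <| oint_nonneg fun y _ =>
    mul_nonneg (inv_nonneg.2 (phi_pos y).le) (oint_phi_nonneg _ _)

lemma continuous_doubleIntegrand (t : ℝ) : Continuous (doubleIntegrand b d t) :=
  continuous_phi.mul <| continuous_oint continuous_const continuous_id <|
    (continuous_inv_phi.comp continuous_snd).mul <|
      continuous_oint (u := fun p : ℝ × ℝ => max p.2 b) (by fun_prop) (by fun_prop)
        (continuous_phi.comp continuous_snd)

lemma doubleIntegrand_mono_left {t t' : ℝ} (h : t ≤ t') (z : ℝ) :
    doubleIntegrand b d t z ≤ doubleIntegrand b d t' z := by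
  have hint : ∀ s, Continuous fun y => (phi y)⁻¹ * oint (max y b) (min d (y - z + s)) phi :=
    fun s => continuous_inv_phi.mul <|
      continuous_oint (g := fun _ => phi) (by fun_prop) (by fun_prop) (by fun_prop)
  refine mul_le_mul_of_nonneg_left (oint_mono (hint t).integrableOn_Ioc
    (hint t').integrableOn_Ioc fun y _ => ?_) (phi_pos z).le
  exact mul_le_mul_of_nonneg_left (oint_phi_mono_right (by gcongr))
    (inv_nonneg.2 (phi_pos y).le)

lemma doubleIntegral_nonneg (t : ℝ) : 0 ≤ doubleIntegral b d t :=
  oint_nonneg fun z _ => doubleIntegrand_nonneg b d t z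

lemma monotone_doubleIntegral : Monotone (doubleIntegral b d) := fun t t' h =>
  calc doubleIntegral b d t ≤ oint b (min d t) (doubleIntegrand b d t') :=
        oint_mono (continuous_doubleIntegrand b d t).integrableOn_Ioc
          (continuous_doubleIntegrand b d t').integrableOn_Ioc
          fun z _ => doubleIntegrand_mono_left b d h z
    _ ≤ doubleIntegral b d t' :=
        oint_mono_right (continuous_doubleIntegrand b d t').integrableOn_Ioc
          (doubleIntegrand_nonneg b d t') (by gcongr)

lemma doubleIntegral_of_two_mul_le {t : ℝ} (hd : 0 ≤ d) (ht : 2 * d ≤ t) :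
    doubleIntegral b d t = oint b d fun z => phi z *
      oint 0 z fun y => (phi y)⁻¹ * oint (max y b) d phi := by
  rw [doubleIntegral, min_eq_left (by linarith)]
  refine setIntegral_congr_fun measurableSet_Ioc fun z hz => ?_
  refine congrArg (phi z * ·) (setIntegral_congr_fun measurableSet_Ioc fun y hy => ?_)
  rw [min_eq_left (by linarith [hz.2, hy.1])]

end doubleIntegral

lemma continuous_intervalIntegral_left {f : ℝ → ℝ} (hf : Continuous f) (d : ℝ) :
    Continuous fun y => ∫ x in y..d, f x := by
  rw [show (fun y => ∫ x in y..d, f x) = fun y => -∫ x in d..y, f x from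
    funext fun y => intervalIntegral.integral_symm d y]
  exact (intervalIntegral.continuous_primitive (fun _ _ => hf.intervalIntegrable _ _) d).neg

lemma oint_phi_mul_oint_max_eq {b d : ℝ} (hb : 0 ≤ b) (hbd : b ≤ d) :
    (oint b d fun z => phi z * oint 0 z fun y => (phi y)⁻¹ * oint (max y b) d phi) =
      (∫ x in b..d, phi x) ^ 2 * (∫ y in (0:ℝ)..b, (phi y)⁻¹)
        + ∫ z in b..d, phi z * ∫ y in b..z, (phi y)⁻¹ * ∫ x in y..d, phi x := by
  set m := ∫ x in b..d, phi x
  set C := ∫ y in (0:ℝ)..b, (phi y)⁻¹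
  set ψ := fun z => ∫ y in b..z, (phi y)⁻¹ * ∫ x in y..d, phi x
  have hw : Continuous fun y => (phi y)⁻¹ * oint (max y b) d phi :=
    continuous_inv_phi.mul <|
      continuous_oint (g := fun _ => phi) (by fun_prop) continuous_const (by fun_prop)
  have hψ : Continuous ψ := intervalIntegral.continuous_primitive (fun _ _ =>
    (continuous_inv_phi.mul (continuous_intervalIntegral_left continuous_phi d)).intervalIntegrable
      _ _) b
  have hsplit : ∀ z ∈ uIcc b d,
      (oint 0 z fun y => (phi y)⁻¹ * oint (max y b) d phi) = C * m + ψ z := by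
    intro z hz
    rw [uIcc_of_le hbd] at hz
    rw [oint_of_le (hb.trans hz.1), ← intervalIntegral.integral_add_adjacent_intervals
      (hw.intervalIntegrable 0 b) (hw.intervalIntegrable b z),
      ← intervalIntegral.integral_mul_const]
    congr 1
    · refine intervalIntegral.integral_congr fun y hy => ?_
      rw [uIcc_of_le hb] at hy
      rw [max_eq_right hy.2, oint_of_le hbd]
    · refine intervalIntegral.integral_congr fun y hy => ?_
      rw [uIcc_of_le hz.1] at hy
      rw [max_eq_left hy.1, oint_of_le (hy.2.trans hz.2)]
  rw [oint_of_le hbd, intervalIntegral.integral_congr fun z hz => by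
    rw [hsplit z hz, mul_add],
    intervalIntegral.integral_add (f := fun z => phi z * (C * m)) (g := fun z => phi z * ψ z)
    ((continuous_phi.mul continuous_const).intervalIntegrable _ _)
    ((continuous_phi.mul hψ).intervalIntegrable _ _), intervalIntegral.integral_mul_const]
  ring

/-- asymptotics of the triple integral `F(λ)`. -/
theorem triple_integral_limit_F (b d : ℝ) (hb : 0 ≤ b) (hbd : b < d) :
    Tendsto (fun lam : ℝ =>
        oint 0 (1 - b / Real.sqrt lam) (fun a1 =>
          oint b (min d (Real.sqrt lam * (1 - a1))) (fun z => phi z *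
            oint 0 z (fun y => (phi y)⁻¹ *
              oint (max y b) (min d (y - z + Real.sqrt lam * (1 - a1))) phi))))
      atTop
      (nhds ((∫ x in b..d, phi x) ^ 2 * (∫ y in (0:ℝ)..b, (phi y)⁻¹)
        + ∫ z in b..d, phi z * ∫ y in b..z, (phi y)⁻¹ * ∫ x in y..d, phi x)) := by
  have hd : 0 ≤ d := hb.trans hbd.le
  have hF := tendsto_oint_comp_mul_one_sub b (monotone_doubleIntegral b d)
    (doubleIntegral_nonneg b d) fun t ht =>
      (doubleIntegral_of_two_mul_le b d hd ht).trans (oint_phi_mul_oint_max_eq hb hbd.le)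
  exact hF.comp tendsto_sqrt_atTop
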